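/- Let Q be a real p×p matrix with nonnegative off-diagonal entries and Q·𝟏 = 0, with kernel of Q equal to the span of 𝟏. Let π be a row vector with strictly positive entries, π·𝟏 = 1, π·Q = 0, let J = 𝟏·π, and assume J − Q is invertible. Let C be a diagonal matrix with nonpositive diagonal entries such that D := Q − C has nonnegative entries. Then π·D·((J − Q)⁻¹ − J)·D·𝟏 ≥ 0. -/

import Mathlib

/-!
Let `J = 𝟏π` and `M = (J - Q)⁻¹ - J`. From `π M = 0` and `Q M = J - 1`, the vector `g = M v`
solves the Poisson equation `Q g = (π ⬝ v) 𝟏 - v`, so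
`(π ∘ v) ⬝ M v = -(π ∘ g) ⬝ Q g = ½ ∑ⱼₖ πⱼ Qⱼₖ (gⱼ - gₖ)² ≥ 0`
for every `v`: this quadratic form is the Dirichlet form of `Q`. When `C` is diagonal,
`D = Q - C` satisfies `π D = π ∘ (D 𝟏)`, so the claim is the case `v = D 𝟏`.
-/

open Matrix

variable {n R : Type*} [Fintype n]

section Dirichlet

variable [CommRing R] {Q : Matrix n n R} {π : n → R}

theorem sum_mul_sub_sq_eq_neg_two_mul (hQ1 : Q *ᵥ 1 = 0) (hπQ : π ᵥ* Q = 0) (g : n → R) :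
    ∑ j, ∑ k, π j * Q j k * (g j - g k) ^ 2 = -2 * ((π * g) ⬝ᵥ (Q *ᵥ g)) := by
  have hrow : ∀ j, ∑ k, Q j k = 0 := fun j => by
    simpa [mulVec, dotProduct] using congrFun hQ1 j
  have hcol : ∀ k, ∑ j, π j * Q j k = 0 := fun k => by
    simpa [vecMul, dotProduct] using congrFun hπQ k
  have hleft : ∑ j, ∑ k, π j * Q j k * g j ^ 2 = 0 := by
    simp only [← Finset.sum_mul, ← Finset.mul_sum, hrow, mul_zero, zero_mul,
      Finset.sum_const_zero]
  have hright : ∑ j, ∑ k, π j * Q j k * g k ^ 2 = 0 := by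
    rw [Finset.sum_comm]
    simp only [← Finset.sum_mul, hcol, zero_mul, Finset.sum_const_zero]
  have hcross : (π * g) ⬝ᵥ (Q *ᵥ g) = ∑ j, ∑ k, π j * Q j k * g j * g k := by
    simp only [dotProduct, mulVec, Pi.mul_apply, Finset.mul_sum]
    exact Finset.sum_congr rfl fun j _ => Finset.sum_congr rfl fun k _ => by ring
  calc ∑ j, ∑ k, π j * Q j k * (g j - g k) ^ 2
      = ∑ j, ∑ k, π j * Q j k * g j ^ 2 + ∑ j, ∑ k, π j * Q j k * g k ^ 2
          - 2 * ∑ j, ∑ k, π j * Q j k * g j * g k := by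
        simp only [Finset.mul_sum, ← Finset.sum_add_distrib, ← Finset.sum_sub_distrib]
        exact Finset.sum_congr rfl fun j _ => Finset.sum_congr rfl fun k _ => by ring
    _ = -2 * ((π * g) ⬝ᵥ (Q *ᵥ g)) := by rw [hleft, hright, hcross]; ring

theorem dotProduct_mul_mulVec_nonpos [LinearOrder R] [IsStrictOrderedRing R]
    (hQoff : ∀ i j, i ≠ j → 0 ≤ Q i j) (hQ1 : Q *ᵥ 1 = 0) (hπ : ∀ i, 0 ≤ π i)
    (hπQ : π ᵥ* Q = 0) (g : n → R) :
    (π * g) ⬝ᵥ (Q *ᵥ g) ≤ 0 := by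
  have hform : 0 ≤ ∑ j, ∑ k, π j * Q j k * (g j - g k) ^ 2 :=
    Finset.sum_nonneg fun j _ => Finset.sum_nonneg fun k _ => by
      rcases eq_or_ne j k with rfl | hjk
      · simp
      · exact mul_nonneg (mul_nonneg (hπ j) (hQoff j k hjk)) (sq_nonneg _)
  rw [sum_mul_sub_sq_eq_neg_two_mul hQ1 hπQ] at hform
  linarith

end Dirichlet

section Deviation

variable [CommRing R] {Q : Matrix n n R} {π : n → R}

theorem vecMul_replicateRow_self (hπ1 : π ⬝ᵥ 1 = 1) : π ᵥ* replicateRow n π = π := by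
  ext j
  simpa [vecMul, dotProduct, ← Finset.sum_mul] using congrArg (· * π j) hπ1

theorem mul_replicateRow_eq_zero (hQ1 : Q *ᵥ 1 = 0) (v : n → R) : Q * replicateRow n v = 0 := by
  ext i j
  simpa [mul_apply, ← Finset.sum_mul, mulVec, dotProduct]
    using congrArg (· * v j) (congrFun hQ1 i)

variable [DecidableEq n]

noncomputable def deviationMatrix (Q : Matrix n n R) (π : n → R) : Matrix n n R :=
  (replicateRow n π - Q)⁻¹ - replicateRow n π

theorem vecMul_inv_sub_replicateRow (hπ1 : π ⬝ᵥ 1 = 1) (hπQ : π ᵥ* Q = 0)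
    (hJQ : IsUnit (replicateRow n π - Q).det) : π ᵥ* (replicateRow n π - Q)⁻¹ = π := by
  have hfix : π ᵥ* (replicateRow n π - Q) = π := by
    rw [vecMul_sub, vecMul_replicateRow_self hπ1, hπQ, sub_zero]
  calc π ᵥ* (replicateRow n π - Q)⁻¹
      = (π ᵥ* (replicateRow n π - Q)) ᵥ* (replicateRow n π - Q)⁻¹ := by rw [hfix]
    _ = π := by rw [vecMul_vecMul, mul_nonsing_inv _ hJQ, vecMul_one]

theorem vecMul_deviationMatrix_eq_zero (hπ1 : π ⬝ᵥ 1 = 1) (hπQ : π ᵥ* Q = 0)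
    (hJQ : IsUnit (replicateRow n π - Q).det) : π ᵥ* deviationMatrix Q π = 0 := by
  rw [deviationMatrix, vecMul_sub, vecMul_inv_sub_replicateRow hπ1 hπQ hJQ,
    vecMul_replicateRow_self hπ1, sub_self]

theorem mul_deviationMatrix (hQ1 : Q *ᵥ 1 = 0) (hπ1 : π ⬝ᵥ 1 = 1) (hπQ : π ᵥ* Q = 0)
    (hJQ : IsUnit (replicateRow n π - Q).det) :
    Q * deviationMatrix Q π = replicateRow n π - 1 := by
  calc Q * deviationMatrix Q π
      = Q * (replicateRow n π - Q)⁻¹ := by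
        rw [deviationMatrix, Matrix.mul_sub, mul_replicateRow_eq_zero hQ1, sub_zero]
    _ = (replicateRow n π - (replicateRow n π - Q)) * (replicateRow n π - Q)⁻¹ := by
        rw [sub_sub_cancel]
    _ = replicateRow n (π ᵥ* (replicateRow n π - Q)⁻¹) - 1 := by
        rw [Matrix.sub_mul, mul_nonsing_inv _ hJQ, replicateRow_vecMul]
    _ = replicateRow n π - 1 := by rw [vecMul_inv_sub_replicateRow hπ1 hπQ hJQ]

theorem dotProduct_mul_deviationMatrix_mulVec_nonneg [LinearOrder R] [IsStrictOrderedRing R]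
    (hQoff : ∀ i j, i ≠ j → 0 ≤ Q i j) (hQ1 : Q *ᵥ 1 = 0) (hπ : ∀ i, 0 ≤ π i)
    (hπ1 : π ⬝ᵥ 1 = 1) (hπQ : π ᵥ* Q = 0) (hJQ : IsUnit (replicateRow n π - Q).det)
    (v : n → R) :
    0 ≤ (π * v) ⬝ᵥ (deviationMatrix Q π *ᵥ v) := by
  set g := deviationMatrix Q π *ᵥ v
  have hπg : π ⬝ᵥ g = 0 := by
    rw [dotProduct_mulVec, vecMul_deviationMatrix_eq_zero hπ1 hπQ hJQ, zero_dotProduct]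
  have hpoisson : v = Function.const n (π ⬝ᵥ v) - Q *ᵥ g := by
    rw [mulVec_mulVec, mul_deviationMatrix hQ1 hπ1 hπQ hJQ, sub_mulVec, one_mulVec,
      replicateRow_mulVec_eq_const, sub_sub_cancel]
  have hsplit : (π * v) ⬝ᵥ g = (π ⬝ᵥ v) * (π ⬝ᵥ g) - (π * g) ⬝ᵥ (Q *ᵥ g) := by
    conv_lhs => rw [hpoisson]
    simp only [dotProduct, Pi.mul_apply, Pi.sub_apply, Function.const_apply, Finset.mul_sum,
      ← Finset.sum_sub_distrib]
    exact Finset.sum_congr rfl fun j _ => by ring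
  rw [hsplit, hπg, mul_zero, zero_sub, neg_nonneg]
  exact dotProduct_mul_mulVec_nonpos hQoff hQ1 hπ hπQ g

end Deviation

theorem vecMul_sub_diagonal_eq_mul_mulVec_one [DecidableEq n] [CommRing R] {Q : Matrix n n R}
    {π : n → R} (hQ1 : Q *ᵥ 1 = 0) (hπQ : π ᵥ* Q = 0) (d : n → R) :
    π ᵥ* (Q - diagonal d) = π * ((Q - diagonal d) *ᵥ 1) := by
  ext j
  simp [vecMul_sub, sub_mulVec, hQ1, hπQ, vecMul_diagonal, mulVec_diagonal]

theorem stmt_4_general {p : ℕ} (Q : Matrix (Fin p) (Fin p) ℝ)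
    (hQoff : ∀ i j, i ≠ j → 0 ≤ Q i j)
    (hQ1 : Q *ᵥ (1 : Fin p → ℝ) = 0)
    (π : Fin p → ℝ) (hπpos : ∀ i, 0 < π i)
    (hπ1 : π ⬝ᵥ (1 : Fin p → ℝ) = 1) (hπQ : π ᵥ* Q = 0)
    (J : Matrix (Fin p) (Fin p) ℝ) (hJ : J = Matrix.of fun _ j => π j)
    (hJQ : IsUnit (J - Q).det)
    (C : Matrix (Fin p) (Fin p) ℝ)
    (hCdiag : ∀ i j, i ≠ j → C i j = 0) :
    0 ≤ (π ᵥ* ((Q - C) * ((J - Q)⁻¹ - J) * (Q - C))) ⬝ᵥ (1 : Fin p → ℝ) := by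
  obtain rfl : J = replicateRow (Fin p) π := hJ
  rw [← IsDiag.diagonal_diag hCdiag, ← vecMul_vecMul, ← dotProduct_mulVec, ← vecMul_vecMul,
    ← dotProduct_mulVec, vecMul_sub_diagonal_eq_mul_mulVec_one hQ1 hπQ]
  exact dotProduct_mul_deviationMatrix_mulVec_nonneg hQoff hQ1 (fun i => (hπpos i).le) hπ1 hπQ
    hJQ _

/-- As in STATEMENT 3, but for the MSPP case: `C` diagonal with nonpositive
diagonal entries and `D := Q − C` with nonnegative entries. Then
`π·D·((J − Q)⁻¹ − J)·D·𝟏 ≥ 0`. -/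
theorem stmt_4 {p : ℕ} (Q : Matrix (Fin p) (Fin p) ℝ)
    (hQoff : ∀ i j, i ≠ j → 0 ≤ Q i j)
    (hQ1 : Q *ᵥ (1 : Fin p → ℝ) = 0)
    (hker : ∀ v : Fin p → ℝ, Q *ᵥ v = 0 → ∃ c : ℝ, v = c • (1 : Fin p → ℝ))
    (π : Fin p → ℝ) (hπpos : ∀ i, 0 < π i)
    (hπ1 : π ⬝ᵥ (1 : Fin p → ℝ) = 1) (hπQ : π ᵥ* Q = 0)
    (J : Matrix (Fin p) (Fin p) ℝ) (hJ : J = Matrix.of fun _ j => π j)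
    (hJQ : IsUnit (J - Q).det)
    (C : Matrix (Fin p) (Fin p) ℝ)
    (hCdiag : ∀ i j, i ≠ j → C i j = 0) (hCnonpos : ∀ i, C i i ≤ 0)
    (hDnonneg : ∀ i j, 0 ≤ (Q - C) i j) :
    0 ≤ (π ᵥ* ((Q - C) * ((J - Q)⁻¹ - J) * (Q - C))) ⬝ᵥ (1 : Fin p → ℝ) :=
  stmt_4_general Q hQoff hQ1 π hπpos hπ1 hπQ J hJ hJQ C hCdiag
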